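/- arXiv:q-alg/9509009 — 3 statements merged into one kernel-verified Lean document; each statement's English description precedes it below -/
import Mathlib

section
/- Lagrange's recursion for elementary symmetric polynomials of 1,...,n-1: for every j with 1 ≤ j ≤ n-1, j·σ_j(1,2,...,n-1) = ∑_{i=0}^{j-1} C(n-i, j+1-i) · σ_i(1,2,...,n-1), where σ₀ = 1. -/
/-- The `j`-th elementary symmetric polynomial of `1, 2, …, n-1`. -/
def esymNat (n j : ℕ) : ℕ := ∑ s ∈ (Finset.Ico 1 n).powersetCard j, ∏ x ∈ s, x

lemma esymNat_zero (n : ℕ) : esymNat n 0 = 1 := by simp [esymNat]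

lemma esymNat_eq_zero {n j : ℕ} (h : n ≤ j) (hj : 0 < j) : esymNat n j = 0 := by
  have : (Finset.Ico 1 n).card < j := by rw [Nat.card_Ico]; omega
  simp [esymNat, Finset.powersetCard_eq_empty.mpr this]

lemma esymNat_succ (n j : ℕ) :
    esymNat (n + 1) (j + 1) = esymNat n (j + 1) + n * esymNat n j := by
  rcases Nat.eq_zero_or_pos n with h | h
  · subst h
    simp [esymNat, show Finset.Ico 1 1 = (Finset.Ico 1 0) from by decide]
  · have hn : n ∉ Finset.Ico 1 n := by simp
    have hins : Finset.Ico 1 (n + 1) = insert n (Finset.Ico 1 n) :=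
      Nat.Ico_succ_right_eq_insert_Ico h
    unfold esymNat
    rw [hins, Finset.powersetCard_succ_insert hn]
    rw [Finset.sum_union]
    · congr 1
      rw [Finset.sum_image]
      · rw [Finset.mul_sum]
        apply Finset.sum_congr rfl
        intro s hs
        have hns : n ∉ s := fun hmem => hn (Finset.mem_powersetCard.mp hs |>.1 hmem)
        rw [Finset.prod_insert hns]
      · intro s hs t ht hst
        have hns : n ∉ s := fun hmem => hn (Finset.mem_powersetCard.mp hs |>.1 hmem)
        have hnt : n ∉ t := fun hmem => hn (Finset.mem_powersetCard.mp ht |>.1 hmem)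
        have := congrArg (Finset.erase · n) hst
        simpa [Finset.erase_insert hns, Finset.erase_insert hnt] using this
    · rw [Finset.disjoint_left]
      intro s hs hs'
      obtain ⟨t, ht, rfl⟩ := Finset.mem_image.mp hs'
      have : insert n t ⊆ Finset.Ico 1 n := (Finset.mem_powersetCard.mp hs).1
      exact hn (this (Finset.mem_insert_self n t))

lemma pascal_sub (n m i : ℕ) (hi : i ≤ m) :
    (n + 1 - i).choose (m + 1 + 1 - i)
      = (n - i).choose (m + 1 + 1 - i) + (n - i).choose (m + 1 - i) := by
  rcases le_or_gt i n with h | h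
  · have h1 : n + 1 - i = (n - i) + 1 := by omega
    have h2 : m + 1 + 1 - i = (m + 1 - i) + 1 := by omega
    rw [h1, h2, Nat.choose_succ_succ, Nat.add_comm]
  · have h2 : n - i = 0 := by omega
    have h2' : n + 1 - i ≤ 1 := by omega
    rw [h2]
    rw [Nat.choose_eq_zero_of_lt (show (0:ℕ) < m + 1 + 1 - i by omega),
      Nat.choose_eq_zero_of_lt (show (0:ℕ) < m + 1 - i by omega),
      Nat.choose_eq_zero_of_lt (show n + 1 - i < m + 1 + 1 - i by omega)]

lemma lagrange_general (n : ℕ) : ∀ j, j * esymNat n j =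
    ∑ i ∈ Finset.range j, (n - i).choose (j + 1 - i) * esymNat n i := by
  induction n with
  | zero =>
    intro j
    rw [Finset.sum_eq_zero, Nat.mul_eq_zero]
    · rcases Nat.eq_zero_or_pos j with h | h
      · exact Or.inl h
      · exact Or.inr (esymNat_eq_zero (by omega) h)
    · intro i hi
      have him := Finset.mem_range.mp hi
      rcases Nat.eq_zero_or_pos i with h | h
      · subst h
        rw [Nat.choose_eq_zero_of_lt (show (0:ℕ) - 0 < j + 1 - 0 by omega), Nat.zero_mul]
      · rw [esymNat_eq_zero (by omega) h, Nat.mul_zero]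
  | succ n ih =>
    intro j
    cases j with
    | zero => simp
    | succ m =>
      have ihm1 := ih (m + 1)
      have ihm := ih m
      have h1 : ∑ i ∈ Finset.range (m + 1), (n + 1 - i).choose (m + 1 + 1 - i) * esymNat (n + 1) i
          = ∑ i ∈ Finset.range (m + 1), (n + 1 - i).choose (m + 1 + 1 - i) * esymNat n i
            + n * ∑ i ∈ Finset.range m, (n - i).choose (m + 1 - i) * esymNat n i := by
        rw [Finset.sum_range_succ',
          Finset.sum_range_succ' (fun i => (n + 1 - i).choose (m + 1 + 1 - i) * esymNat n i)]
        simp only [esymNat_succ, Nat.add_sub_add_right, Nat.sub_zero, esymNat_zero, mul_one]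
        have hc : ∑ x ∈ Finset.range m, (n - x).choose (m + 1 - x) * (n * esymNat n x)
            = n * ∑ x ∈ Finset.range m, (n - x).choose (m + 1 - x) * esymNat n x := by
          rw [Finset.mul_sum]
          exact Finset.sum_congr rfl (fun i _ => by ring)
        simp only [Nat.mul_add, Finset.sum_add_distrib, hc]
        ring
      have h2 : ∑ i ∈ Finset.range (m + 1), (n + 1 - i).choose (m + 1 + 1 - i) * esymNat n i
          = ∑ i ∈ Finset.range (m + 1), (n - i).choose (m + 1 + 1 - i) * esymNat n i
            + ∑ i ∈ Finset.range (m + 1), (n - i).choose (m + 1 - i) * esymNat n i := by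
        rw [← Finset.sum_add_distrib]
        apply Finset.sum_congr rfl
        intro i hi
        rw [pascal_sub n m i (Nat.lt_succ_iff.mp (Finset.mem_range.mp hi)), Nat.add_mul]
      have hsplit : ∑ i ∈ Finset.range (m + 1), (n - i).choose (m + 1 - i) * esymNat n i
          = m * esymNat n m + (n - m) * esymNat n m := by
        rw [Finset.sum_range_succ, ← ihm, show m + 1 - m = 1 by omega, Nat.choose_one_right]
      rw [h1, h2, hsplit, esymNat_succ, ← ihm1, ← ihm]
      rcases le_or_gt m n with h | h
      · obtain ⟨k, rfl⟩ : ∃ k, n = m + k := ⟨n - m, by omega⟩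
        rw [Nat.add_sub_cancel_left]
        ring
      · rw [esymNat_eq_zero (le_of_lt h) (by omega)]
        ring

/-- Lagrange's recursion: for `1 ≤ j ≤ n-1`,
`j·σ_j(1,…,n-1) = ∑_{i=0}^{j-1} C(n-i, j+1-i)·σ_i(1,…,n-1)`. -/
theorem lagrange_esymm_recursion (n j : ℕ) (hj : 1 ≤ j) (hjn : j ≤ n - 1) :
    j * esymNat n j = ∑ i ∈ Finset.range j, (n - i).choose (j + 1 - i) * esymNat n i := by
  exact lagrange_general n j
end

section
/- With F_{i,l}(x) as defined by the recursion F_{0,0} = 1, F_{i,−1} = F_{i,i+1} = 0, F_{i+1,l} = F_{i,l−1} − (2i+1−l)x F_{i,l} + (x²−4) F'_{i,l}, one has F_{i+1,i}(x) = −x·C(i+2, 2) = −x·(i+1)(i+2)/2 for all i ≥ 0. -/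
/-- The polynomials `F_{i,l}(x)` defined by `F_{0,0} = 1`, `F_{i,l} = 0` for
`l > i` (in particular `F_{i,i+1} = 0`), `F_{i,-1} = 0` (encoded by the `l = 0`
case), and
`F_{i+1,l} = F_{i,l-1} - (2i+1-l)·x·F_{i,l} + (x²-4)·F'_{i,l}`. -/
noncomputable def FPoly : ℕ → ℕ → Polynomial ℤ
  | 0, 0 => 1
  | 0, _ + 1 => 0
  | i + 1, l =>
      (if l = 0 then 0 else FPoly i (l - 1)) -
        Polynomial.C ((2 * i + 1 : ℤ) - l) * Polynomial.X * FPoly i l +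
        (Polynomial.X ^ 2 - 4) * Polynomial.derivative (FPoly i l)

lemma FPoly_zero_of_gt : ∀ i l : ℕ, i < l → FPoly i l = 0 := by
  intro i
  induction i with
  | zero =>
    intro l hl
    match l, hl with
    | l + 1, _ => rfl
  | succ i ih =>
    intro l hl
    match l, hl with
    | l + 1, hl =>
      have h1 : FPoly i l = 0 := ih l (by omega)
      have h2 : FPoly i (l + 1) = 0 := ih (l + 1) (by omega)
      show (if l + 1 = 0 then 0 else FPoly i (l + 1 - 1)) -
        Polynomial.C ((2 * i + 1 : ℤ) - (l+1)) * Polynomial.X * FPoly i (l+1) +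
        (Polynomial.X ^ 2 - 4) * Polynomial.derivative (FPoly i (l+1)) = 0
      simp [h1, h2]

lemma FPoly_diag : ∀ i : ℕ, FPoly i i = 1 := by
  intro i
  induction i with
  | zero => rfl
  | succ i ih =>
    have h2 : FPoly i (i + 1) = 0 := FPoly_zero_of_gt i (i+1) (by omega)
    show (if i + 1 = 0 then 0 else FPoly i (i + 1 - 1)) -
      Polynomial.C ((2 * i + 1 : ℤ) - (i+1)) * Polynomial.X * FPoly i (i+1) +
      (Polynomial.X ^ 2 - 4) * Polynomial.derivative (FPoly i (i+1)) = 1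
    simp [ih, h2]

/-- `F_{i+1,i}(x) = -x·C(i+2,2) = -x·(i+1)(i+2)/2` for all `i ≥ 0`. -/
theorem FPoly_succ (i : ℕ) : FPoly (i + 1) i = -(Polynomial.C ((i + 2).choose 2 : ℤ)) * Polynomial.X := by
  induction i with
  | zero =>
    show (if (0:ℕ) = 0 then 0 else FPoly 0 (0 - 1)) -
      Polynomial.C ((2 * 0 + 1 : ℤ) - 0) * Polynomial.X * FPoly 0 0 +
      (Polynomial.X ^ 2 - 4) * Polynomial.derivative (FPoly 0 0) = _
    simp [FPoly]
  | succ i ih =>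
    have hd : FPoly (i+1) (i+1) = 1 := FPoly_diag (i+1)
    show (if i + 1 = 0 then 0 else FPoly (i+1) (i + 1 - 1)) -
      Polynomial.C ((2 * (i+1) + 1 : ℤ) - (i+1)) * Polynomial.X * FPoly (i+1) (i+1) +
      (Polynomial.X ^ 2 - 4) * Polynomial.derivative (FPoly (i+1) (i+1)) =
      -(Polynomial.C ((i + 3).choose 2 : ℤ)) * Polynomial.X
    rw [hd]
    simp only [if_neg (Nat.succ_ne_zero i), Nat.add_sub_cancel, ih]
    have hc : ((i + 3).choose 2 : ℤ) = ((i + 2).choose 2 : ℤ) + (i + 2) := by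
      have := Nat.succ_sub_one (i+2)
      rw [show i + 3 = (i + 2) + 1 by ring, Nat.choose_succ_succ (i+2) 1]
      push_cast [Nat.choose_one_right]
      ring
    rw [hc]
    simp only [Polynomial.derivative_one, mul_zero, map_add]
    rw [show ((2:ℤ) * (i + 1) + 1 - (i + 1)) = (i:ℤ)+2 from by ring, show ((i:ℤ)+2) = (i:ℤ)+2 from rfl, map_add]
    ring
end

section
/- With F_{i,l}(x) defined by the recursion F_{0,0} = 1, F_{i,−1} = F_{i,i+1} = 0, F_{i+1,l} = F_{i,l−1} − (2i+1−l)x F_{i,l} + (x²−4) F'_{i,l}, the polynomial F_{i+k,i}(x) has degree exactly k in x, for all i ≥ 0 and k ≥ 0. -/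
open Polynomial

lemma FPoly_eq_zero : ∀ i l, i < l → FPoly i l = 0 := by
  intro i
  induction i with
  | zero =>
    intro l hl
    match l, hl with
    | l + 1, _ => rfl
  | succ i ih =>
    intro l hl
    rw [FPoly]
    have h1 : FPoly i l = 0 := ih l (by omega)
    have h2 : l ≠ 0 := by omega
    have h3 : FPoly i (l - 1) = 0 := ih (l - 1) (by omega)
    simp [h1, h2, h3]

lemma FPoly_spec : ∀ i l, l ≤ i → (FPoly i l).natDegree ≤ i - l ∧
    0 < (-1 : ℤ) ^ (i - l) * (FPoly i l).coeff (i - l) := by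
  intro i
  induction i with
  | zero =>
    intro l hl
    interval_cases l
    constructor
    · simp [FPoly]
    · simp [FPoly]
  | succ i ih =>
    intro l hl
    rcases Nat.lt_or_ge i l with h | h
    · -- l = i + 1
      have hl' : l = i + 1 := by omega
      subst hl'
      rw [FPoly, FPoly_eq_zero i (i + 1) (by omega)]
      simp only [derivative_zero, mul_zero, add_zero, sub_zero,
        if_neg (Nat.succ_ne_zero i), Nat.add_sub_cancel]
      have := ih i le_rfl
      simpa using this
    · -- l ≤ i
      obtain ⟨d, hd⟩ : ∃ d, i - l = d := ⟨_, rfl⟩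
      obtain ⟨hdeg, hpos⟩ := ih l h
      rw [hd] at hdeg hpos
      have hdsucc : i + 1 - l = d + 1 := by omega
      rw [FPoly, hdsucc]
      set F := FPoly i l with hF
      set A : Polynomial ℤ := if l = 0 then 0 else FPoly i (l - 1) with hA
      -- degree bound for A
      have hAdeg : A.natDegree ≤ d + 1 := by
        rcases Nat.eq_zero_or_pos l with h0 | h0
        · simp [hA, h0]
        · have h1 := (ih (l - 1) (by omega)).1
          rw [(by omega : i - (l - 1) = d + 1)] at h1
          rw [hA, if_neg (by omega : ¬ l = 0)]
          exact h1
      -- coeff of A at d+1 (signed positivity, or zero if l = 0)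
      have hAcoeff : (l = 0 ∧ A.coeff (d + 1) = 0) ∨
          (l ≠ 0 ∧ 0 < (-1 : ℤ) ^ (d + 1) * A.coeff (d + 1)) := by
        rcases Nat.eq_zero_or_pos l with h0 | h0
        · left; exact ⟨h0, by simp [hA, h0]⟩
        · right
          refine ⟨by omega, ?_⟩
          have h1 := (ih (l - 1) (by omega)).2
          rw [(by omega : i - (l - 1) = d + 1)] at h1
          rw [hA, if_neg (by omega : ¬ l = 0)]
          exact h1
      -- coefficients of F above d vanish
      have hFhigh : ∀ m, d < m → F.coeff m = 0 := fun m hm =>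
        coeff_eq_zero_of_natDegree_lt (lt_of_le_of_lt hdeg hm)
      clear_value F A
      have hBcoeff : (Polynomial.C ((2 * i + 1 : ℤ) - l) * Polynomial.X * F).coeff (d + 1)
          = ((2 * i + 1 : ℤ) - l) * F.coeff d := by
        rw [mul_assoc, coeff_C_mul, coeff_X_mul]
      have hCcoeff : ((Polynomial.X ^ 2 - 4) * derivative F).coeff (d + 1)
          = (d : ℤ) * F.coeff d := by
        rw [sub_mul, coeff_sub]
        have h4 : ((4 : Polynomial ℤ) * derivative F).coeff (d + 1) = 0 := by
          have h5 : (4 : Polynomial ℤ) = Polynomial.C 4 := by norm_num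
          rw [h5, coeff_C_mul, coeff_derivative, hFhigh (d + 2) (by omega)]
          ring
        rw [h4, sub_zero]
        rcases Nat.eq_zero_or_pos d with h0 | h0
        · subst h0
          rw [mul_comm, coeff_mul_X_pow']
          simp
        · obtain ⟨e, rfl⟩ : ∃ e, d = e + 1 := ⟨d - 1, by omega⟩
          rw [mul_comm, show e + 1 + 1 = e + 2 from rfl, coeff_mul_X_pow']
          simp only [if_pos (by omega : 2 ≤ e + 2), show e + 2 - 2 = e from by omega]
          rw [coeff_derivative]
          push_cast
          ring
      constructor
      · -- natDegree bound
        refine le_trans (natDegree_add_le _ _) ?_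
        refine max_le (le_trans (natDegree_sub_le _ _) (max_le hAdeg ?_)) ?_
        · refine le_trans (natDegree_mul_le) ?_
          have h1 : (Polynomial.C ((2 * i + 1 : ℤ) - l) * Polynomial.X).natDegree ≤ 1 :=
            le_trans (natDegree_C_mul_le _ _) natDegree_X_le
          omega
        · rcases Nat.eq_zero_or_pos d with h0 | h0
          · -- F is constant, derivative is 0
            have h2 : F = Polynomial.C (F.coeff 0) :=
              eq_C_of_natDegree_le_zero (by omega)
            rw [h2]
            simp
          · refine le_trans (natDegree_mul_le) ?_
            have h1 : (Polynomial.X ^ 2 - (4 : Polynomial ℤ)).natDegree ≤ 2 := by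
              compute_degree
            have h2 : (derivative F).natDegree ≤ d - 1 :=
              le_trans (natDegree_derivative_le _) (by omega)
            omega
      · -- signed coefficient positivity
        rw [coeff_add, coeff_sub, hBcoeff, hCcoeff]
        have hcast : ((l : ℤ)) + (d : ℤ) = (i : ℤ) := by
          have h6 : l + d = i := by omega
          exact_mod_cast congrArg (Nat.cast : ℕ → ℤ) h6
        have key : A.coeff (d + 1) - ((2 * i + 1 : ℤ) - l) * F.coeff d + (d : ℤ) * F.coeff d
            = A.coeff (d + 1) - ((i : ℤ) + 1) * F.coeff d := by
          linear_combination (F.coeff d) * hcast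
        rw [key]
        have hmain : 0 < ((i : ℤ) + 1) * ((-1 : ℤ) ^ d * F.coeff d) :=
          mul_pos (by positivity) hpos
        have hsign : (-1 : ℤ) ^ (d + 1) * (A.coeff (d + 1) - ((i : ℤ) + 1) * F.coeff d)
            = (-1 : ℤ) ^ (d + 1) * A.coeff (d + 1) + ((i : ℤ) + 1) * ((-1 : ℤ) ^ d * F.coeff d) := by
          ring
        rw [hsign]
        rcases hAcoeff with ⟨_, hz⟩ | ⟨_, hp⟩
        · rw [hz]; simpa using hmain
        · linarith

/-- `F_{i+k,i}(x)` has degree exactly `k` for all `i, k ≥ 0`. -/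
theorem FPoly_degree (i k : ℕ) : (FPoly (i + k) i).degree = (k : ℕ) := by
  obtain ⟨h1, h2⟩ := FPoly_spec (i + k) i (by omega)
  have hk : i + k - i = k := by omega
  rw [hk] at h1 h2
  have hne : (FPoly (i + k) i).coeff k ≠ 0 := by
    intro h; rw [h, mul_zero] at h2; exact lt_irrefl _ h2
  exact le_antisymm (natDegree_le_iff_degree_le.mp h1) (le_degree_of_ne_zero hne)
end
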